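/- arXiv:2010.02583 — 4 statements merged into one kernel-verified Lean document; each statement's English description precedes it below -/
import Mathlib

section
/- Let V ⊆ ℝ² be a Euclidean TSP instance and let a, b ∈ V be such that V ⊆ segment ℝ a b. Then every tour σ of V satisfies c(σ) ≥ 2 · dist(a, b). -/
/-- Points in the Euclidean plane. -/
abbrev Pt : Type := EuclideanSpace ℝ (Fin 2)

/-- A tour of a finite point set `V`: a map sending `V` into `V` that acts as a
single cycle on all of `V`. -/
def IsTour (V : Finset Pt) (σ : Pt → Pt) : Prop :=
  (∀ x ∈ V, σ x ∈ V) ∧ ∀ x ∈ V, ∀ y ∈ V, ∃ m : ℕ, σ^[m] x = y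

/-- The length of a tour. -/
noncomputable def tourLength (V : Finset Pt) (σ : Pt → Pt) : ℝ :=
  ∑ x ∈ V, dist x (σ x)

/-- An optimal tour. -/
def IsOptimalTour (V : Finset Pt) (σ : Pt → Pt) : Prop :=
  IsTour V σ ∧ ∀ τ : Pt → Pt, IsTour V τ → tourLength V σ ≤ tourLength V τ

/-- A 2-optimal tour. -/
def IsTwoOptimalTour (V : Finset Pt) (σ : Pt → Pt) : Prop :=
  IsTour V σ ∧ ∀ a ∈ V, ∀ x ∈ V,
    dist a (σ a) + dist x (σ x) ≤ dist a x + dist (σ a) (σ x)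

/-!
Following `σ` from `a` until it first returns to `a` traces a closed walk through distinct points
of `V` that passes through `b`. By the triangle inequality, each of its two arcs, from `a` to `b`
and from `b` back to `a`, is at least `dist a b` long.
-/

namespace Function

open Finset

variable {α : Type*} [PseudoMetricSpace α]

/-- This is `0` when `x` is not periodic, since then `minimalPeriod f x = 0`. -/
noncomputable def periodicOrbitLength (f : α → α) (x : α) : ℝ :=
  ∑ i ∈ range (minimalPeriod f x), dist (f^[i] x) (f^[i + 1] x)

theorem periodicOrbitLength_le_sum_dist {f : α → α} {V : Finset α} (hV : ∀ y ∈ V, f y ∈ V)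
    {x : α} (hx : x ∈ V) :
    periodicOrbitLength f x ≤ ∑ y ∈ V, dist y (f y) := by
  classical
  have horbit : (range (minimalPeriod f x)).image (f^[·] x) ⊆ V := by
    rintro _ hy
    obtain ⟨i, -, rfl⟩ := mem_image.mp hy
    exact Set.MapsTo.iterate hV i hx
  calc periodicOrbitLength f x
      = ∑ y ∈ (range (minimalPeriod f x)).image (f^[·] x), dist y (f y) := by
        rw [periodicOrbitLength, sum_image fun i hi j hj hij => iterate_injOn_Iio_minimalPeriod
          (by simpa using hi) (by simpa using hj) hij]
        simp only [iterate_succ_apply']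
    _ ≤ ∑ y ∈ V, dist y (f y) := sum_le_sum_of_subset_of_nonneg horbit fun _ _ _ => dist_nonneg

theorem two_mul_dist_iterate_le_periodicOrbitLength {f : α → α} {x : α}
    (hx : x ∈ periodicPts f) (k : ℕ) :
    2 * dist x (f^[k] x) ≤ periodicOrbitLength f x := by
  set n := minimalPeriod f x
  set r := k % n
  have hrn : r ≤ n := (Nat.mod_lt k (minimalPeriod_pos_of_mem_periodicPts hx)).le
  have h_there : dist x (f^[k] x) ≤ ∑ i ∈ Ico 0 r, dist (f^[i] x) (f^[i + 1] x) := by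
    simpa [r, n, iterate_mod_minimalPeriod_eq] using dist_le_Ico_sum_dist (f^[·] x) r.zero_le
  have h_back : dist (f^[k] x) x ≤ ∑ i ∈ Ico r n, dist (f^[i] x) (f^[i + 1] x) := by
    simpa [r, n, iterate_mod_minimalPeriod_eq, iterate_minimalPeriod]
      using dist_le_Ico_sum_dist (f^[·] x) hrn
  rw [periodicOrbitLength, ← Nat.Ico_zero_eq_range, ← sum_Ico_consecutive _ r.zero_le hrn]
  linarith [dist_comm x (f^[k] x)]

end Function

open Function in
theorem tour_length_ge_of_subset_segment_general (V : Finset Pt)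
    (a b : Pt) (ha : a ∈ V) (hb : b ∈ V)
    (σ : Pt → Pt) (hσ : IsTour V σ) :
    2 * dist a b ≤ tourLength V σ := by
  obtain ⟨hmaps, hreach⟩ := hσ
  obtain ⟨k, rfl⟩ := hreach a ha b hb
  have hperiodic : a ∈ periodicPts σ := by
    obtain ⟨m, hm⟩ := hreach (σ a) (hmaps a ha) a ha
    exact mk_mem_periodicPts m.succ_pos hm
  exact (two_mul_dist_iterate_le_periodicOrbitLength hperiodic k).trans
    (periodicOrbitLength_le_sum_dist hmaps ha)

theorem tour_length_ge_of_subset_segment (V : Finset Pt) (hV : 3 ≤ V.card)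
    (a b : Pt) (ha : a ∈ V) (hb : b ∈ V) (hseg : (V : Set Pt) ⊆ segment ℝ a b)
    (σ : Pt → Pt) (hσ : IsTour V σ) :
    2 * dist a b ≤ tourLength V σ :=
  tour_length_ge_of_subset_segment_general V a b ha hb σ hσ
end

section
/- Let V ⊆ ℝ² be a non-degenerate Euclidean TSP instance and let σ be a 2-optimal tour of V. Then σ is simple: for all a, x ∈ V with a ≠ x, the intersection segment ℝ a (σ a) ∩ segment ℝ x (σ x) contains no point lying in openSegment ℝ a (σ a) ∪ openSegment ℝ x (σ x); that is, no two distinct edges of the tour intersect in a point that is interior to at least one of the two corresponding line segments. -/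
namespace TwoOptAux

attribute [local instance] Classical.propDecidable

variable {o e : Pt}

lemma lm_inj (he : e ≠ 0) {s s' : ℝ} (h : o + s • e = o + s' • e) : s = s' := by
  have h2 : (s - s') • e = 0 := by
    have h3 := sub_eq_zero.2 h
    rw [add_sub_add_left_eq_sub, ← sub_smul] at h3
    exact h3
  rcases smul_eq_zero.1 h2 with h3 | h3
  · have : s - s' = 0 := h3
    linarith [this]
  · exact absurd h3 he

lemma lm_mem_open_ordered {s₁ s₂ s₃ : ℝ} (h12 : s₁ < s₂) (h23 : s₂ < s₃) :
    (o + s₂ • e) ∈ openSegment ℝ (o + s₁ • e) (o + s₃ • e) := by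
  rw [openSegment_eq_image']
  have h13 : (0:ℝ) < s₃ - s₁ := by linarith
  refine ⟨(s₂ - s₁) / (s₃ - s₁), ⟨div_pos (by linarith) h13, ?_⟩, ?_⟩
  · rw [div_lt_one h13]; linarith
  · show o + s₁ • e + ((s₂ - s₁) / (s₃ - s₁)) • ((o + s₃ • e) - (o + s₁ • e)) = o + s₂ • e
    rw [add_sub_add_left_eq_sub, ← sub_smul, smul_smul, div_mul_cancel₀ _ (ne_of_gt h13),
      add_assoc, ← add_smul]
    congr 1
    ring
  
lemma lm_mem_open {xp zp up : Pt} {s₁ s₂ s₃ : ℝ}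
    (h1 : xp = o + s₁ • e) (h3 : zp = o + s₃ • e) (h2 : up = o + s₂ • e)
    (hpat : s₁ < s₂ ∧ s₂ < s₃ ∨ s₃ < s₂ ∧ s₂ < s₁) :
    up ∈ openSegment ℝ xp zp := by
  subst h1 h3 h2
  rcases hpat with ⟨ha, hb⟩ | ⟨ha, hb⟩
  · exact lm_mem_open_ordered ha hb
  · rw [openSegment_symm]; exact lm_mem_open_ordered ha hb

lemma lm_open_coords {xp zp up : Pt} {s₁ s₃ : ℝ}
    (h1 : xp = o + s₁ • e) (h3 : zp = o + s₃ • e) (hne : s₁ ≠ s₃)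
    (hu : up ∈ openSegment ℝ xp zp) :
    ∃ s₂, up = o + s₂ • e ∧ (s₁ < s₂ ∧ s₂ < s₃ ∨ s₃ < s₂ ∧ s₂ < s₁) := by
  subst h1 h3
  rw [openSegment_eq_image'] at hu
  obtain ⟨θ, ⟨hθ0, hθ1⟩, hval⟩ := hu
  have hval' : o + s₁ • e + θ • ((o + s₃ • e) - (o + s₁ • e)) = up := hval
  rw [add_sub_add_left_eq_sub, ← sub_smul, smul_smul, add_assoc, ← add_smul] at hval'
  refine ⟨s₁ + θ * (s₃ - s₁), hval'.symm, ?_⟩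
  rcases lt_or_gt_of_ne hne with h | h
  · left; constructor <;> nlinarith
  · right; constructor <;> nlinarith

lemma lm_ext (he : e ≠ 0) {x u y : Pt} {sx su : ℝ}
    (hx : x = o + sx • e) (hu : u = o + su • e) (hne : sx ≠ su)
    (h : Wbtw ℝ x u y) :
    ∃ sy, y = o + sy • e ∧ (sx < su → su ≤ sy) ∧ (su < sx → sy ≤ su) := by
  have hu' : u ∈ segment ℝ x y := mem_segment_iff_wbtw.2 h
  rw [segment_eq_image'] at hu'
  obtain ⟨θ, ⟨hθ0, hθ1⟩, hval⟩ := hu'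
  have hval' : x + θ • (y - x) = u := hval
  have hθ : θ ≠ 0 := by
    rintro rfl
    rw [zero_smul, add_zero] at hval'
    exact hne (lm_inj he (by rw [← hx, hval', hu]))
  have hθ0' : 0 < θ := lt_of_le_of_ne hθ0 (Ne.symm hθ)
  have hyx : θ • (y - x) = (su - sx) • e := by
    have h2 : θ • (y - x) = u - x := by rw [← hval']; abel
    rw [h2, hu, hx, add_sub_add_left_eq_sub, ← sub_smul]
  have hy : y = o + (sx + (su - sx) / θ) • e := by
    have h4 : y - x = ((su - sx) / θ) • e := by
      rw [div_eq_inv_mul, ← smul_smul, ← hyx, inv_smul_smul₀ hθ]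
    have h5 : y = x + ((su - sx) / θ) • e := by rw [← h4]; abel
    rw [h5, hx, add_assoc, ← add_smul]
  refine ⟨sx + (su - sx) / θ, hy, ?_, ?_⟩
  · intro hlt
    have : su - sx ≤ (su - sx) / θ := by
      rw [le_div_iff₀ hθ0']; nlinarith
    linarith
  · intro hlt
    have : (su - sx) / θ ≤ su - sx := by
      rw [div_le_iff₀ hθ0']; nlinarith
    linarith

variable {V : Finset Pt} {σ : Pt → Pt}

lemma iter_mem (hσV : ∀ x ∈ V, σ x ∈ V) {x : Pt} (hx : x ∈ V) :
    ∀ k, σ^[k] x ∈ V := by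
  intro k
  induction k with
  | zero => simpa using hx
  | succ k ih => rw [Function.iterate_succ_apply']; exact hσV _ ih

lemma pred_exists (hV : 3 ≤ V.card) (ht : IsTour V σ) :
    ∀ y ∈ V, ∃ z ∈ V, σ z = y := by
  intro y hy
  obtain ⟨x, hxV, hxy⟩ := Finset.exists_mem_ne (show 1 < V.card by omega) y
  obtain ⟨m, hm⟩ := ht.2 x hxV y hy
  match m, hm with
  | 0, hm => exact absurd hm hxy
  | (k+1), hm =>
    refine ⟨σ^[k] x, iter_mem ht.1 hxV k, ?_⟩
    rw [← Function.iterate_succ_apply' σ k x]; exact hm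

lemma no_fix (hV : 3 ≤ V.card) (ht : IsTour V σ) :
    ∀ x ∈ V, σ x ≠ x := by
  intro x hx hfix
  obtain ⟨y, hyV, hyx⟩ := Finset.exists_mem_ne (show 1 < V.card by omega) x
  obtain ⟨m, hm⟩ := ht.2 x hx y hyV
  rw [Function.iterate_fixed hfix] at hm
  exact hyx hm.symm

lemma no_two_cycle (hV : 3 ≤ V.card) (ht : IsTour V σ) :
    ∀ x ∈ V, σ (σ x) ≠ x := by
  intro x hx h2c
  have hcard : 0 < ((V.erase x).erase (σ x)).card := by
    have h1 := Finset.card_erase_le (a := σ x) (s := V.erase x)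
    have h2 : (V.erase x).card = V.card - 1 := Finset.card_erase_of_mem hx
    have h3 : ((V.erase x).erase (σ x)).card ≥ (V.erase x).card - 1 :=
      Finset.pred_card_le_card_erase
    omega
  obtain ⟨z, hz⟩ := Finset.card_pos.1 hcard
  have hzx : z ≠ x := Finset.ne_of_mem_erase (Finset.mem_of_mem_erase hz)
  have hzsx : z ≠ σ x := Finset.ne_of_mem_erase hz
  have hzV : z ∈ V := Finset.mem_of_mem_erase (Finset.mem_of_mem_erase hz)
  obtain ⟨m, hm⟩ := ht.2 x hx z hzV
  have key : ∀ k, σ^[k] x = x ∨ σ^[k] x = σ x := by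
    intro k
    induction k with
    | zero => left; rfl
    | succ k ih =>
      rcases ih with h | h <;> rw [Function.iterate_succ_apply', h]
      · right; rfl
      · left; exact h2c
  rcases key m with h | h
  · exact hzx (by rw [← hm, h])
  · exact hzsx (by rw [← hm, h])

lemma sigma_injOn (hV : 3 ≤ V.card) (ht : IsTour V σ) :
    ∀ a ∈ V, ∀ b ∈ V, σ a = σ b → a = b := by
  have h := Finset.inj_on_of_surj_on_of_card_le (s := V) (t := V)
    (f := fun a _ => σ a) (fun a ha => ht.1 a ha)
    (fun b hb => by
      obtain ⟨z, hzV, hz⟩ := pred_exists hV ht b hb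
      exact ⟨z, hzV, hz⟩)
    le_rfl
  intro a ha b hb hab
  exact h ha hb hab

lemma iter_injOn (hV : 3 ≤ V.card) (ht : IsTour V σ) :
    ∀ k, ∀ a ∈ V, ∀ b ∈ V, σ^[k] a = σ^[k] b → a = b := by
  intro k
  induction k with
  | zero => intro a _ b _ h; simpa using h
  | succ k ih =>
    intro a ha b hb h
    rw [Function.iterate_succ_apply', Function.iterate_succ_apply'] at h
    exact ih a ha b hb
      (sigma_injOn hV ht _ (iter_mem ht.1 ha k) _ (iter_mem ht.1 hb k) h)

lemma orbit_structure (hV : 3 ≤ V.card) (ht : IsTour V σ) {c₀ : Pt} (hc : c₀ ∈ V) :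
    (∀ i, i < V.card → ∀ j, j < V.card → σ^[i] c₀ = σ^[j] c₀ → i = j) ∧
    (∀ y ∈ V, ∃ i, i < V.card ∧ σ^[i] c₀ = y) := by
  set n := V.card with hn
  have hcancel : ∀ i j, i ≤ j → σ^[i] c₀ = σ^[j] c₀ → σ^[j - i] c₀ = c₀ := by
    intro i j hij h
    have hj : j = i + (j - i) := by omega
    rw [hj, Function.iterate_add_apply] at h
    exact iter_injOn hV ht i _ (iter_mem ht.1 hc _) _ hc h.symm
  have hex : ∃ q, 0 < q ∧ σ^[q] c₀ = c₀ ∧ q ≤ n := by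
    obtain ⟨i, hi, j, hj, hij, hfij⟩ :=
      Finset.exists_ne_map_eq_of_card_lt_of_maps_to
        (s := Finset.range (n + 1)) (t := V)
        (by rw [Finset.card_range]; omega)
        (f := fun i => σ^[i] c₀) (fun i _ => iter_mem ht.1 hc i)
    simp only [Finset.mem_range] at hi hj
    rcases lt_or_gt_of_ne hij with h | h
    · exact ⟨j - i, by omega, hcancel i j (le_of_lt h) hfij, by omega⟩
    · exact ⟨i - j, by omega, hcancel j i (le_of_lt h) hfij.symm, by omega⟩
  have hex' : ∃ q, 0 < q ∧ σ^[q] c₀ = c₀ := ⟨hex.choose, hex.choose_spec.1, hex.choose_spec.2.1⟩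
  set q := Nat.find hex' with hq
  have hqspec : 0 < q ∧ σ^[q] c₀ = c₀ := Nat.find_spec hex'
  have hqle : q ≤ n := le_trans (Nat.find_min' hex' ⟨hex.choose_spec.1, hex.choose_spec.2.1⟩)
    hex.choose_spec.2.2
  have hdist : ∀ i, i < q → ∀ j, j < q → σ^[i] c₀ = σ^[j] c₀ → i = j := by
    intro i hi j hj h
    by_contra hne
    rcases lt_or_gt_of_ne hne with hlt | hlt
    · exact Nat.find_min hex' (m := j - i) (by omega) ⟨by omega, hcancel i j (by omega) h⟩
    · exact Nat.find_min hex' (m := i - j) (by omega) ⟨by omega, hcancel j i (by omega) h.symm⟩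
  set O := (Finset.range q).image (fun i => σ^[i] c₀) with hO
  have hOV : O ⊆ V := by
    intro y hy
    simp only [hO, Finset.mem_image, Finset.mem_range] at hy
    obtain ⟨i, _, rfl⟩ := hy
    exact iter_mem ht.1 hc i
  have hclosed : ∀ y ∈ O, σ y ∈ O := by
    intro y hy
    simp only [hO, Finset.mem_image, Finset.mem_range] at hy ⊢
    obtain ⟨i, hi, rfl⟩ := hy
    rcases Nat.lt_or_ge (i+1) q with h | h
    · exact ⟨i+1, h, Function.iterate_succ_apply' σ i c₀⟩
    · have : i + 1 = q := by omega
      have h2 : σ (σ^[i] c₀) = c₀ := by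
        rw [← Function.iterate_succ_apply' σ i c₀, Nat.succ_eq_add_one, this, hqspec.2]
      exact ⟨0, hqspec.1, by simpa using h2.symm⟩
  have hVO : ∀ y ∈ V, y ∈ O := by
    have hiter : ∀ m, σ^[m] c₀ ∈ O := by
      intro m
      induction m with
      | zero =>
        simp only [Function.iterate_zero_apply, hO, Finset.mem_image, Finset.mem_range]
        exact ⟨0, hqspec.1, rfl⟩
      | succ m ih =>
        rw [Function.iterate_succ_apply' σ m c₀]
        exact hclosed _ ih
    intro y hy
    obtain ⟨m, hm⟩ := ht.2 c₀ hc y hy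
    rw [← hm]; exact hiter m
  have hqn : q = n := by
    have h1 : V.card ≤ O.card := Finset.card_le_card (fun y hy => hVO y hy)
    have h2 : O.card ≤ q := le_trans Finset.card_image_le (by rw [Finset.card_range])
    omega
  constructor
  · intro i hi j hj h
    exact hdist i (by omega) j (by omega) h
  · intro y hy
    have := hVO y hy
    simp only [hO, Finset.mem_image, Finset.mem_range] at this
    obtain ⟨i, hi, hival⟩ := this
    exact ⟨i, by omega, hival⟩

def PiercedOn (V : Finset Pt) (σ : Pt → Pt) (o e : Pt) (u : Pt) (su : ℝ) : Prop :=
  ∃ c, c ∈ V ∧ ∃ sc sd, c = o + sc • e ∧ σ c = o + sd • e ∧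
    (sc < su ∧ su < sd ∨ sd < su ∧ su < sc)

lemma succA1
    (h2 : ∀ a ∈ V, ∀ x ∈ V, dist a (σ a) + dist x (σ x) ≤ dist a x + dist (σ a) (σ x))
    {o e : Pt} (he : e ≠ 0) {u : Pt} {su : ℝ} (huV : u ∈ V) (hu : u = o + su • e)
    (hp : PiercedOn V σ o e u su) :
    ∃ s' : ℝ, σ u = o + s' • e := by
  obtain ⟨c, hcV, sc, sd, hc, hd, hpat⟩ := hp
  have hop : u ∈ openSegment ℝ c (σ c) := lm_mem_open hc hd hu hpat
  have hw : Wbtw ℝ c u (σ c) :=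
    mem_segment_iff_wbtw.1 (openSegment_subset_segment ℝ _ _ hop)
  have e₁ : dist c u + dist u (σ c) = dist c (σ c) := hw.dist_add_dist
  have hineq := h2 c hcV u huV
  have tri : dist (σ c) (σ u) ≤ dist (σ c) u + dist u (σ u) := dist_triangle _ _ _
  have hcomm : dist (σ c) u = dist u (σ c) := dist_comm _ _
  have key : dist (σ c) u + dist u (σ u) = dist (σ c) (σ u) := by linarith
  have hwb : Wbtw ℝ (σ c) u (σ u) := dist_add_dist_eq_iff.1 key
  have hne : sd ≠ su := by
    rcases hpat with ⟨hA, hB⟩ | ⟨hA, hB⟩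
    · exact ne_of_gt hB
    · exact ne_of_lt hA
  obtain ⟨s', hs', _⟩ := lm_ext he hd hu hne hwb
  exact ⟨s', hs'⟩

lemma predB1 (hV : 3 ≤ V.card) (ht : IsTour V σ)
    (h2 : ∀ a ∈ V, ∀ x ∈ V, dist a (σ a) + dist x (σ x) ≤ dist a x + dist (σ a) (σ x))
    {o e : Pt} (he : e ≠ 0) {u : Pt} {su : ℝ} (huV : u ∈ V) (hu : u = o + su • e)
    {c : Pt} {sc sd : ℝ} (hcV : c ∈ V) (hc : c = o + sc • e) (hd : σ c = o + sd • e)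
    (hasc : sc < su ∧ su < sd) :
    ∃ z sz, z ∈ V ∧ σ z = u ∧ z = o + sz • e ∧ su < sz := by
  obtain ⟨z, hzV, hz⟩ := pred_exists hV ht u huV
  have hop : u ∈ openSegment ℝ c (σ c) := lm_mem_open hc hd hu (Or.inl hasc)
  have hw : Wbtw ℝ c u (σ c) :=
    mem_segment_iff_wbtw.1 (openSegment_subset_segment ℝ _ _ hop)
  have e₁ : dist c u + dist u (σ c) = dist c (σ c) := hw.dist_add_dist
  have hineq := h2 z hzV c hcV
  rw [hz] at hineq
  have tri : dist z c ≤ dist z u + dist u c := dist_triangle _ _ _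
  have hcomm : dist c u = dist u c := dist_comm _ _
  have key : dist z u + dist u c = dist z c := by linarith
  have hwb : Wbtw ℝ z u c := dist_add_dist_eq_iff.1 key
  obtain ⟨sz, hsz, hdir, _⟩ := lm_ext he hc hu (ne_of_lt hasc.1) hwb.symm
  have hle := hdir hasc.1
  have hzu : z ≠ u := by
    rintro rfl
    exact no_fix hV ht z hzV hz
  have hne : sz ≠ su := fun hh => hzu (by rw [hsz, hh, ← hu])
  exact ⟨z, sz, hzV, hz, hsz, lt_of_le_of_ne hle (Ne.symm hne)⟩

lemma climbUp (hV : 3 ≤ V.card) (ht : IsTour V σ)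
    (h2 : ∀ a ∈ V, ∀ x ∈ V, dist a (σ a) + dist x (σ x) ≤ dist a x + dist (σ a) (σ x))
    {o e : Pt} (he : e ≠ 0)
    {m : ℕ} (hm : 1 ≤ m) {g : ℕ → Pt} {τ : ℕ → ℝ}
    (hgV : ∀ i, i ≤ m → g i ∈ V)
    (hgτ : ∀ i, i ≤ m → g i = o + τ i • e)
    (hgσ : ∀ i, i < m → σ (g i) = g (i + 1))
    (hginj : ∀ i, i ≤ m → ∀ j, j ≤ m → g i = g j → i = j)
    {v₀ : Pt} {s₀ : ℝ} (hv₀V : v₀ ∈ V) (hv₀ : v₀ = o + s₀ • e)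
    (hseed : τ 0 < s₀ ∧ s₀ < τ 1 ∨ τ 1 < s₀ ∧ s₀ < τ 0)
    (hsb : s₀ < τ m) :
    ∃ s' : ℝ, σ (g m) = o + s' • e := by
  have hmin01 : min (τ 0) (τ 1) < s₀ := by
    rcases hseed with ⟨hA, _⟩ | ⟨hA, _⟩
    · exact lt_of_le_of_lt (min_le_left _ _) hA
    · exact lt_of_le_of_lt (min_le_right _ _) hA
  have hbV : g m ∈ V := hgV m le_rfl
  have hbτ : g m = o + τ m • e := hgτ m le_rfl
  -- any on-line vertex strictly under the top, with a descending successor, is pierced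
  have pierceGet : ∀ w sw, w ∈ V → w = o + sw • e → min (τ 0) (τ 1) < sw → sw < τ m →
      (∃ s' : ℝ, σ w = o + s' • e ∧ s' < sw) → PiercedOn V σ o e w sw := by
    intro w sw hwV hw hlow hub hdesc
    by_cases harc : ∃ k, k ≤ m ∧ g k = w
    · obtain ⟨k, hkm, hkw⟩ := harc
      have hτk : τ k = sw := lm_inj he (by rw [← hgτ k hkm, hkw, hw])
      have hklt : k < m := by
        rcases Nat.lt_or_ge k m with hx | hx
        · exact hx
        · exfalso
          have hkm' : k = m := le_antisymm hkm hx
          rw [hkm'] at hτk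
          linarith
      obtain ⟨s', hs', hs'lt⟩ := hdesc
      have hk1m : k + 1 ≤ m := hklt
      have hτk1 : τ (k + 1) = s' :=
        lm_inj he (by rw [← hgτ (k+1) hk1m, ← hgσ k hklt, hkw, hs'])
      have hexq : ∃ i, k < i ∧ i ≤ m ∧ τ k ≤ τ i :=
        ⟨m, hklt, le_rfl, by rw [hτk]; exact le_of_lt hub⟩
      set k' := Nat.find hexq with hk'def
      obtain ⟨hk'1, hk'2, hk'3⟩ := Nat.find_spec hexq
      rw [← hk'def] at hk'1 hk'2 hk'3
      have hk'ne : k' ≠ k + 1 := by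
        intro hh
        rw [hh] at hk'3
        rw [hτk1] at hk'3
        rw [hτk] at hk'3
        linarith
      have hk'gt : k + 1 < k' := by
        rcases Nat.lt_or_ge (k+1) k' with hx | hx
        · exact hx
        · omega
      have hk'm1 : ¬ (k < k' - 1 ∧ k' - 1 ≤ m ∧ τ k ≤ τ (k' - 1)) :=
        Nat.find_min hexq (by omega)
      have hτk'm1 : τ (k' - 1) < τ k := by
        by_contra hx
        exact hk'm1 ⟨by omega, by omega, by linarith⟩
      have hτk' : τ k < τ k' := by
        rcases lt_or_eq_of_le hk'3 with hx | hx
        · exact hx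
        · exfalso
          have : g k = g k' := by
            rw [hgτ k hkm, hgτ k' hk'2, hx]
          have := hginj k hkm k' hk'2 this
          omega
      refine ⟨g (k' - 1), hgV _ (by omega), τ (k' - 1), τ k', hgτ _ (by omega), ?_, ?_⟩
      · have hstep : σ (g (k' - 1)) = g (k' - 1 + 1) := hgσ _ (by omega)
        have heq : k' - 1 + 1 = k' := by omega
        rw [hstep, heq]
        exact hgτ k' hk'2
      · left
        constructor
        · rw [← hτk]; exact hτk'm1
        · rw [← hτk]; exact hτk'
    · -- straddle case : w is not an arc vertex
      have h0m : 0 ≤ m := Nat.zero_le m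
      have hexP : ∃ i, i ≤ m ∧ τ i ≤ sw := by
        rcases le_total (τ 0) (τ 1) with hx | hx
        · exact ⟨0, by omega, by have := min_eq_left hx ▸ hlow; linarith [min_eq_left hx, hlow]⟩
        · exact ⟨1, hm, by linarith [min_eq_right hx, hlow]⟩
      set P := (Finset.range (m+1)).filter (fun i => τ i ≤ sw) with hPdef
      have hPne : P.Nonempty := by
        obtain ⟨i, hi1, hi2⟩ := hexP
        exact ⟨i, by simp only [hPdef, Finset.mem_filter, Finset.mem_range]; exact ⟨by omega, hi2⟩⟩
      set k := P.max' hPne with hkdef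
      have hkP : k ∈ P := P.max'_mem hPne
      simp only [hPdef, Finset.mem_filter, Finset.mem_range] at hkP
      have hkm : k ≤ m := by omega
      have hτk : τ k ≤ sw := hkP.2
      have hklt : k < m := by
        rcases Nat.lt_or_ge k m with hx | hx
        · exact hx
        · exfalso
          have : k = m := by omega
          rw [this] at hτk
          linarith
      have hk1 : ¬ (τ (k+1) ≤ sw) := by
        intro hx
        have hin : k + 1 ∈ P := by
          simp only [hPdef, Finset.mem_filter, Finset.mem_range]
          exact ⟨by omega, hx⟩
        have := P.le_max' _ hin
        omega
      have hτk1 : sw < τ (k+1) := lt_of_not_ge hk1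
      have hτkstrict : τ k < sw := by
        rcases lt_or_eq_of_le hτk with hx | hx
        · exact hx
        · exfalso
          exact harc ⟨k, hkm, by rw [hgτ k hkm, hx, ← hw]⟩
      refine ⟨g k, hgV _ hkm, τ k, τ (k+1), hgτ _ hkm, ?_, Or.inl ⟨hτkstrict, hτk1⟩⟩
      rw [hgσ k hklt]
      exact hgτ (k+1) hklt
  -- main climbing induction
  have main : ∀ N : ℕ, ∀ u su, u ∈ V → u = o + su • e → s₀ ≤ su → su < τ m →
      PiercedOn V σ o e u su →
      (V.filter (fun w => ∃ sw, w = o + sw • e ∧ su < sw)).card < N →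
      ∃ s' : ℝ, σ (g m) = o + s' • e := by
    intro N
    induction N with
    | zero => intro u su _ _ _ _ _ hcard; omega
    | succ N ih =>
      intro u su huV hu hlow hub hp hcard
      have hstep : ∀ (z : Pt) (sz : ℝ), z ∈ V → z = o + sz • e → su < sz →
          (V.filter (fun w => ∃ sw, w = o + sw • e ∧ sz < sw)).card < N := by
        intro z sz hzV hz hlt
        have hss : (V.filter (fun w => ∃ sw, w = o + sw • e ∧ sz < sw)) ⊂
            (V.filter (fun w => ∃ sw, w = o + sw • e ∧ su < sw)) := by
          rw [Finset.ssubset_def]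
          constructor
          · intro w hw
            simp only [Finset.mem_filter] at hw ⊢
            obtain ⟨hwV, sw, hww, hswlt⟩ := hw
            exact ⟨hwV, sw, hww, lt_trans hlt hswlt⟩
          · intro hsub
            have hzin : z ∈ V.filter (fun w => ∃ sw, w = o + sw • e ∧ su < sw) := by
              simp only [Finset.mem_filter]
              exact ⟨hzV, sz, hz, hlt⟩
            have hzin2 := hsub hzin
            simp only [Finset.mem_filter] at hzin2
            obtain ⟨_, sw, hww, hswlt⟩ := hzin2
            have : sw = sz := lm_inj he (by rw [← hww, hz])
            linarith
        have := Finset.card_lt_card hss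
        omega
      obtain ⟨c, hcV, sc, sd, hc, hd, hpat⟩ := hp
      rcases hpat with ⟨h1, h1'⟩ | ⟨h1, h1'⟩
      · -- ascending piercer
        obtain ⟨z, sz, hzV, hz, hzc, hzgt⟩ := predB1 hV ht h2 he huV hu hcV hc hd ⟨h1, h1'⟩
        have hzd : σ z = o + su • e := by rw [hz]; exact hu
        rcases lt_trichotomy sz (τ m) with hlt | heq | hgt
        · have hpz : PiercedOn V σ o e z sz :=
            pierceGet z sz hzV hzc (lt_trans (lt_of_lt_of_le hmin01 hlow) hzgt) hlt
              ⟨su, hzd, hzgt⟩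
          exact ih z sz hzV hzc (le_of_lt (lt_of_le_of_lt hlow hzgt)) hlt hpz
            (hstep z sz hzV hzc hzgt)
        · have hzb : z = g m := by rw [hzc, heq, ← hbτ]
          refine ⟨su, ?_⟩
          rw [← hzb, hz]
          exact hu
        · exact succA1 h2 he hbV hbτ ⟨z, hzV, sz, su, hzc, hzd, Or.inr ⟨hub, hgt⟩⟩
      · -- descending piercer : sd < su < sc
        rcases lt_trichotomy sc (τ m) with hlt | heq | hgt
        · have hpc : PiercedOn V σ o e c sc :=
            pierceGet c sc hcV hc (lt_trans (lt_of_lt_of_le hmin01 hlow) h1') hlt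
              ⟨sd, hd, lt_trans h1 h1'⟩
          exact ih c sc hcV hc (le_of_lt (lt_of_le_of_lt hlow h1')) hlt hpc
            (hstep c sc hcV hc h1')
        · have hcb : c = g m := by rw [hc, heq, ← hbτ]
          refine ⟨sd, ?_⟩
          rw [← hcb]
          exact hd
        · exact succA1 h2 he hbV hbτ ⟨c, hcV, sc, sd, hc, hd, Or.inr ⟨lt_trans h1 hub, hgt⟩⟩
  have hseedP : PiercedOn V σ o e v₀ s₀ :=
    ⟨g 0, hgV 0 (Nat.zero_le m), τ 0, τ 1, hgτ 0 (Nat.zero_le m),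
      by rw [hgσ 0 hm]; exact hgτ 1 hm, hseed⟩
  exact main ((V.filter (fun w => ∃ sw, w = o + sw • e ∧ s₀ < sw)).card + 1) v₀ s₀
    hv₀V hv₀ le_rfl hsb hseedP (Nat.lt_succ_self _)

lemma noPierce (hV : 3 ≤ V.card) (hnd : ¬ Collinear ℝ (V : Set Pt)) (ht : IsTour V σ)
    (h2 : ∀ a ∈ V, ∀ x ∈ V, dist a (σ a) + dist x (σ x) ≤ dist a x + dist (σ a) (σ x)) :
    ∀ c₀ ∈ V, ∀ v₀ ∈ V, v₀ ∉ openSegment ℝ c₀ (σ c₀) := by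
  intro c₀ hc₀ v₀ hv₀V hmem
  have hd₀V : σ c₀ ∈ V := ht.1 c₀ hc₀
  have hnefix : σ c₀ ≠ c₀ := no_fix hV ht c₀ hc₀
  set o := c₀ with hodef
  set e : Pt := σ c₀ - c₀ with hedef
  have he : e ≠ 0 := sub_ne_zero.2 hnefix
  have hoc : c₀ = o + (0:ℝ) • e := by simp [hodef]
  have hod : σ c₀ = o + (1:ℝ) • e := by
    rw [one_smul, hedef, hodef]
    abel
  obtain ⟨s₀, hs₀, hseedpat⟩ := lm_open_coords hoc hod (by norm_num) hmem
  have hs01 : 0 < s₀ ∧ s₀ < 1 := by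
    rcases hseedpat with h | h
    · exact h
    · exfalso; linarith [h.1, h.2]
  obtain ⟨hdist, hsurj⟩ := orbit_structure hV ht hc₀
  set n := V.card with hndef
  have hiterV : ∀ k, σ^[k] c₀ ∈ V := by
    intro k
    induction k with
    | zero => simpa using hc₀
    | succ k ih => rw [Function.iterate_succ_apply']; exact ht.1 _ ih
  have honL : ∀ j, j < n → ∃ s : ℝ, σ^[j] c₀ = o + s • e := by
    intro j
    induction j using Nat.strong_induction_on with
    | _ j ih =>
      intro hj
      match j with
      | 0 => exact ⟨0, by simpa using hoc⟩
      | 1 => exact ⟨1, by simpa using hod⟩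
      | (j' + 2) =>
        set m := j' + 1 with hmdef
        set g : ℕ → Pt := fun i => σ^[i] c₀ with hgdef
        have hex : ∀ i, i ≤ m → ∃ s : ℝ, g i = o + s • e := fun i hi =>
          ih i (by omega) (by omega)
        set τ : ℕ → ℝ := fun i =>
          if h : ∃ s : ℝ, g i = o + s • e then h.choose else 0 with hτdef
        have hgτ : ∀ i, i ≤ m → g i = o + τ i • e := by
          intro i hi
          have h := hex i hi
          simp only [hτdef, dif_pos h]
          exact h.choose_spec
        have hτ0 : τ 0 = 0 := by
          have h1 : o + τ 0 • e = o + (0:ℝ) • e := by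
            rw [← hgτ 0 (by omega)]
            simpa [hgdef] using hoc
          exact lm_inj he h1
        have hτ1 : τ 1 = 1 := by
          have h1 : o + τ 1 • e = o + (1:ℝ) • e := by
            rw [← hgτ 1 (by omega)]
            simpa [hgdef] using hod
          exact lm_inj he h1
        have hgV : ∀ i, i ≤ m → g i ∈ V := fun i _ => hiterV i
        have hgσ : ∀ i, i < m → σ (g i) = g (i + 1) := by
          intro i _
          simp only [hgdef]
          exact (Function.iterate_succ_apply' σ i c₀).symm
        have hginj : ∀ i, i ≤ m → ∀ j'', j'' ≤ m → g i = g j'' → i = j'' := by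
          intro i hi j'' hj'' heq
          exact hdist i (by omega) j'' (by omega) heq
        have hconc : ∃ s : ℝ, σ (g m) = o + s • e := by
          rcases lt_trichotomy s₀ (τ m) with hlt | heqc | hgt
          · exact climbUp hV ht h2 he (by omega) hgV hgτ hgσ hginj hv₀V hs₀
              (Or.inl ⟨by rw [hτ0]; exact hs01.1, by rw [hτ1]; exact hs01.2⟩) hlt
          · have hvb : v₀ = g m := by
              rw [hs₀, heqc, ← hgτ m le_rfl]
            rw [← hvb]
            exact succA1 h2 he hv₀V hs₀
              ⟨c₀, hc₀, 0, 1, hoc, hod, Or.inl hs01⟩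
          · have he' : (-e) ≠ 0 := neg_ne_zero.2 he
            have hcoord : ∀ (z : Pt) (s : ℝ), z = o + s • e → z = o + (-s) • (-e) := by
              intro z s hz
              rw [neg_smul_neg]
              exact hz
            have hgτ' : ∀ i, i ≤ m → g i = o + (fun i => -(τ i)) i • (-e) := by
              intro i hi
              exact hcoord _ _ (hgτ i hi)
            obtain ⟨s', hs'⟩ := climbUp hV ht h2 he' (show 1 ≤ m by omega) hgV hgτ'
              hgσ hginj hv₀V (hcoord _ _ hs₀)
              (Or.inr ⟨by show -(τ 1) < -s₀; rw [hτ1]; linarith [hs01.2],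
                by show -s₀ < -(τ 0); rw [hτ0]; linarith [hs01.1]⟩)
              (by show -s₀ < -(τ m); linarith)
            refine ⟨-s', ?_⟩
            rw [hs', smul_neg, neg_smul]
        obtain ⟨s, hs⟩ := hconc
        refine ⟨s, ?_⟩
        rw [← hs]
        simp only [hgdef, hmdef]
        exact Function.iterate_succ_apply' σ (j' + 1) c₀
  have hcol : Collinear ℝ (V : Set Pt) := by
    rw [collinear_iff_of_mem (Finset.mem_coe.2 hc₀)]
    refine ⟨e, ?_⟩
    intro p hp
    obtain ⟨i, hi, hival⟩ := hsurj p (Finset.mem_coe.1 hp)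
    obtain ⟨s, hs⟩ := honL i hi
    refine ⟨s, ?_⟩
    rw [← hival, hs]
    rw [vadd_eq_add, hodef]
    abel
  exact hnd hcol

lemma key (hV : 3 ≤ V.card) (hnd : ¬ Collinear ℝ (V : Set Pt)) (ht : IsTour V σ)
    (h2 : ∀ a ∈ V, ∀ x ∈ V, dist a (σ a) + dist x (σ x) ≤ dist a x + dist (σ a) (σ x)) :
    ∀ a ∈ V, ∀ x ∈ V, ∀ p : Pt, p ∈ segment ℝ a (σ a) → p ∈ segment ℝ x (σ x) →
      p ∈ openSegment ℝ a (σ a) → False := by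
  intro a ha x hx p hpa hpx hpo
  have hbV : σ a ∈ V := ht.1 a ha
  have hyV : σ x ∈ V := ht.1 x hx
  have hnefix : σ a ≠ a := no_fix hV ht a ha
  set o := a with hodef
  set e : Pt := σ a - a with hedef
  have he : e ≠ 0 := sub_ne_zero.2 hnefix
  have hoa : a = o + (0:ℝ) • e := by simp [hodef]
  have hob : σ a = o + (1:ℝ) • e := by
    rw [one_smul, hedef, hodef]; abel
  obtain ⟨θ, hθ, hθpat⟩ := lm_open_coords hoa hob (by norm_num) hpo
  have hθ01 : 0 < θ ∧ θ < 1 := by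
    rcases hθpat with h | h
    · exact h
    · exfalso; linarith [h.1, h.2]
  have hw1 : Wbtw ℝ a p (σ a) := mem_segment_iff_wbtw.1 hpa
  have hw2 : Wbtw ℝ x p (σ x) := mem_segment_iff_wbtw.1 hpx
  have e₁ : dist a p + dist p (σ a) = dist a (σ a) := hw1.dist_add_dist
  have e₂ : dist x p + dist p (σ x) = dist x (σ x) := hw2.dist_add_dist
  have t₁ : dist a x ≤ dist a p + dist p x := dist_triangle _ _ _
  have t₂ : dist (σ a) (σ x) ≤ dist (σ a) p + dist p (σ x) := dist_triangle _ _ _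
  have hineq := h2 a ha x hx
  have c1 : dist p (σ a) = dist (σ a) p := dist_comm _ _
  have c2 : dist x p = dist p x := dist_comm _ _
  have EQ1 : dist a p + dist p x = dist a x := by linarith
  have EQ2 : dist (σ a) p + dist p (σ x) = dist (σ a) (σ x) := by linarith
  have hwax : Wbtw ℝ a p x := dist_add_dist_eq_iff.1 EQ1
  have hwby : Wbtw ℝ (σ a) p (σ x) := dist_add_dist_eq_iff.1 EQ2
  obtain ⟨sx, hsx, hdx, _⟩ := lm_ext he hoa hθ (ne_of_lt hθ01.1) hwax
  have hsxge : θ ≤ sx := hdx hθ01.1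
  obtain ⟨sy, hsy, _, hdy⟩ := lm_ext he hob hθ (ne_of_gt hθ01.2) hwby
  have hsyle : sy ≤ θ := hdy hθ01.2
  rcases lt_trichotomy sx 1 with hc | hc | hc
  · exact noPierce hV hnd ht h2 a ha x hx
      (lm_mem_open hoa hob hsx (Or.inl ⟨lt_of_lt_of_le hθ01.1 hsxge, hc⟩))
  · have hxb : x = σ a := by rw [hsx, hc, ← hob]
    rcases lt_trichotomy sy 0 with hd | hd | hd
    · exact noPierce hV hnd ht h2 x hx a ha
        (lm_mem_open hsx hsy hoa (Or.inr ⟨hd, by rw [hc]; norm_num⟩))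
    · have hya : σ x = a := by rw [hsy, hd, ← hoa]
      have h2c : σ (σ a) = a := by rw [← hxb, hya]
      exact no_two_cycle hV ht a ha h2c
    · exact noPierce hV hnd ht h2 a ha (σ x) hyV
        (lm_mem_open hoa hob hsy (Or.inl ⟨hd, lt_of_le_of_lt hsyle hθ01.2⟩))
  · exact noPierce hV hnd ht h2 x hx (σ a) hbV
      (lm_mem_open hsx hsy hob (Or.inr ⟨lt_of_le_of_lt hsyle hθ01.2, hc⟩))

end TwoOptAux

theorem two_opt_tour_is_simple (V : Finset Pt) (hV : 3 ≤ V.card)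
    (hnd : ¬ Collinear ℝ (V : Set Pt)) (σ : Pt → Pt)
    (hσ : IsTwoOptimalTour V σ) :
    ∀ a ∈ V, ∀ x ∈ V, a ≠ x →
      ∀ p : Pt, p ∈ segment ℝ a (σ a) ∩ segment ℝ x (σ x) →
        p ∉ openSegment ℝ a (σ a) ∪ openSegment ℝ x (σ x) := by
  obtain ⟨ht, h2⟩ := hσ
  intro a ha x hx _hax p hp hmem
  rcases hmem with h | h
  · exact TwoOptAux.key hV hnd ht h2 a ha x hx p hp.1 hp.2 h
  · exact TwoOptAux.key hV hnd ht h2 x hx a ha p hp.2 hp.1 h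
end

section
/- Let (V, r, parent) be an arborescence with edge weights c, w : V → ℝ satisfying the combined triangle inequality. Then for every non-root vertex v: c(v) ≤ Σ_{u ∈ Desc(v)} w(u), i.e., the c-weight of any edge is at most the total w-weight of the sub-arborescence below it. -/
/-- `(r, parent)` is an arborescence on `V`: the root is a fixed point of
`parent`, and every vertex reaches the root by iterating `parent`. -/
def IsArborescence {V : Type} (r : V) (parent : V → V) : Prop :=
  parent r = r ∧ ∀ v : V, ∃ n : ℕ, parent^[n] v = r

open Classical in
/-- The children of a vertex `y`. -/
noncomputable def children {V : Type} [Fintype V] (parent : V → V) (y : V) : Finset V :=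
  Finset.univ.filter fun u => parent u = y ∧ u ≠ y

open Classical in
/-- The descendants of a vertex `v` (including `v` itself): the vertex set of the
sub-arborescence below the edge entering `v`. -/
noncomputable def desc {V : Type} [Fintype V] (parent : V → V) (v : V) : Finset V :=
  Finset.univ.filter fun u => ∃ n : ℕ, parent^[n] u = v

open Classical in
/-- The non-root vertices, corresponding to the edges of the arborescence. -/
noncomputable def nonRoot {V : Type} [Fintype V] (r : V) : Finset V :=
  Finset.univ.filter fun v => v ≠ r

/-- The combined triangle inequality. -/
def CombinedTriangle {V : Type} [Fintype V] (r : V) (parent : V → V) (c w : V → ℝ) : Prop :=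
  ∀ v : V, v ≠ r → c v ≤ w v + ∑ u ∈ children parent v, c u

open Classical in
/-- The combined 2-optimality condition. -/
noncomputable def CombinedTwoOpt {V : Type} [Fintype V] (r : V) (parent : V → V) (c w : V → ℝ) : Prop :=
  ∀ v : V, v ≠ r → ∀ z ∈ children parent v,
    c v + c z ≤ w v + ∑ u ∈ (children parent v).erase z, c u

theorem edge_weight_le_subtree_weight {V : Type} [Fintype V]
    (r : V) (parent : V → V) (c w : V → ℝ)
    (harb : IsArborescence r parent)
    (htri : CombinedTriangle r parent c w) :
    ∀ v : V, v ≠ r → c v ≤ ∑ u ∈ desc parent v, w u := by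
  classical
  obtain ⟨hr, hreach⟩ := harb
  have hfix : ∀ k, parent^[k] r = r := fun k => Function.iterate_fixed hr k
  have hstab : ∀ (x : V) (m k : ℕ), m ≤ k → parent^[m] x = r → parent^[k] x = r := by
    intro x m k hmk h
    have : parent^[k] x = parent^[k - m] (parent^[m] x) := by
      rw [← Function.iterate_add_apply]
      congr 1; omega
    rw [this, h, hfix]
  have hfixpt : ∀ v : V, parent v = v → v = r := by
    intro v hv
    obtain ⟨m, hm⟩ := hreach v
    rw [Function.iterate_fixed hv m] at hm
    exact hm
  have noCycle : ∀ v : V, v ≠ r → ∀ k, parent^[k + 1] v ≠ v := by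
    intro v hv k hcyc
    have hmul : ∀ t, parent^[t * (k + 1)] v = v := by
      intro t; induction t with
      | zero => simp
      | succ t ih =>
        have h1 : (t + 1) * (k + 1) = k + 1 + t * (k + 1) := by ring
        rw [h1, Function.iterate_add_apply, ih, hcyc]
    obtain ⟨m, hm⟩ := hreach v
    have hle : m ≤ m * (k + 1) := Nat.le_mul_of_pos_right m (Nat.succ_pos k)
    have := hstab v m (m * (k + 1)) hle hm
    rw [hmul m] at this
    exact hv this
  have memdesc : ∀ u v : V, u ∈ desc parent v ↔ ∃ n : ℕ, parent^[n] u = v := by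
    intro u v; simp [desc]
  have memch : ∀ u v : V, u ∈ children parent v ↔ parent u = v ∧ u ≠ v := by
    intro u v; simp [children]
  have key : ∀ N : ℕ, ∀ v : V, v ≠ r → (desc parent v).card ≤ N →
      c v ≤ ∑ u ∈ desc parent v, w u := by
    intro N
    induction N with
    | zero =>
      intro v hv hcard
      exfalso
      have hvd : v ∈ desc parent v := (memdesc v v).mpr ⟨0, rfl⟩
      have := Finset.card_pos.mpr ⟨v, hvd⟩
      omega
    | succ N ih =>
      intro v hv hcard
      -- children are not the root
      have hchr : ∀ u ∈ children parent v, u ≠ r := by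
        intro u hu heq
        obtain ⟨hpu, hune⟩ := (memch u v).mp hu
        subst heq
        exact hv (hr ▸ hpu).symm
      -- v not a descendant of any child
      have hvnot : ∀ u ∈ children parent v, v ∉ desc parent u := by
        intro u hu hvd
        obtain ⟨hpu, _⟩ := (memch u v).mp hu
        obtain ⟨m, hm⟩ := (memdesc v u).mp hvd
        have : parent^[m + 1] v = v := by
          rw [Function.iterate_succ_apply', hm, hpu]
        exact noCycle v hv m this
      -- desc of child included in desc of v
      have hsub : ∀ u ∈ children parent v, desc parent u ⊆ desc parent v := by
        intro u hu x hx
        obtain ⟨hpu, _⟩ := (memch u v).mp hu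
        obtain ⟨m, hm⟩ := (memdesc x u).mp hx
        refine (memdesc x v).mpr ⟨m + 1, ?_⟩
        rw [Function.iterate_succ_apply', hm, hpu]
      -- decomposition
      have hdecomp : desc parent v
          = insert v ((children parent v).biUnion fun u => desc parent u) := by
        ext x
        constructor
        · intro hx
          obtain ⟨n, hn⟩ := (memdesc x v).mp hx
          rcases n with _ | m
          · simp at hn; simp [hn]
          · set y := parent^[m] x with hy
            have hpy : parent y = v := by
              rw [Function.iterate_succ_apply'] at hn
              rw [hy]; exact hn
            by_cases hyv : y = v
            · exfalso
              rw [hyv] at hpy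
              exact hv (hfixpt v hpy)
            · have hych : y ∈ children parent v := (memch y v).mpr ⟨hpy, hyv⟩
              have : x ∈ desc parent y := (memdesc x y).mpr ⟨m, hy.symm⟩
              exact Finset.mem_insert.mpr (Or.inr (Finset.mem_biUnion.mpr ⟨y, hych, this⟩))
        · intro hx
          rcases Finset.mem_insert.mp hx with h | h
          · exact h ▸ (memdesc v v).mpr ⟨0, rfl⟩
          · obtain ⟨u, hu, hxu⟩ := Finset.mem_biUnion.mp h
            exact hsub u hu hxu
      have hvnotbi : v ∉ (children parent v).biUnion fun u => desc parent u := by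
        intro h
        obtain ⟨u, hu, hvu⟩ := Finset.mem_biUnion.mp h
        exact hvnot u hu hvu
      -- pairwise disjoint
      have hdisj : ((children parent v : Finset V) : Set V).Pairwise
          (Function.onFun Disjoint fun u => desc parent u) := by
        intro a ha b hb hab
        simp only [Finset.coe_mem, Finset.mem_coe] at ha hb
        refine Finset.disjoint_left.mpr ?_
        intro x hxa hxb
        obtain ⟨m, hm⟩ := (memdesc x a).mp hxa
        obtain ⟨k, hk⟩ := (memdesc x b).mp hxb
        obtain ⟨hpa, _⟩ := (memch a v).mp ha
        obtain ⟨hpb, _⟩ := (memch b v).mp hb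
        -- wlog m ≤ k
        have main : ∀ a b : V, ∀ m k : ℕ, m ≤ k → parent a = v → parent b = v →
            a ≠ b → parent^[m] x = a → parent^[k] x = b → False := by
          intro a b m k hmk hpa hpb hab hm hk
          have hkb : parent^[k - m] a = b := by
            rw [← hm, ← Function.iterate_add_apply]
            have : k - m + m = k := by omega
            rw [this, hk]
          rcases Nat.eq_or_lt_of_le hmk with heq | hlt
          · rw [heq] at hm; exact hab (hm.symm.trans hk)
          · have hj : ∃ j, k - m = j + 1 := ⟨k - m - 1, by omega⟩
            obtain ⟨j, hjeq⟩ := hj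
            have : parent^[j + 1] (parent a) = parent a := by
              rw [← Function.iterate_succ_apply, Function.iterate_succ_apply',
                ← hjeq, hkb, hpb, ← hpa]
            rw [hpa] at this
            exact noCycle v hv j this
        rcases le_total m k with hmk | hkm
        · exact main a b m k hmk hpa hpb hab hm hk
        · exact main b a k m hkm hpb hpa hab.symm hk hm
      have hsum : ∑ u ∈ desc parent v, w u
          = w v + ∑ u ∈ children parent v, ∑ x ∈ desc parent u, w x := by
        rw [hdecomp, Finset.sum_insert hvnotbi, Finset.sum_biUnion hdisj]
      have hcardlt : ∀ u ∈ children parent v, (desc parent u).card ≤ N := by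
        intro u hu
        have hss : desc parent u ⊂ desc parent v := by
          refine Finset.ssubset_iff_of_subset (hsub u hu) |>.mpr ?_
          exact ⟨v, (memdesc v v).mpr ⟨0, rfl⟩, hvnot u hu⟩
        have := Finset.card_lt_card hss
        omega
      calc c v ≤ w v + ∑ u ∈ children parent v, c u := htri v hv
        _ ≤ w v + ∑ u ∈ children parent v, ∑ x ∈ desc parent u, w x := by
            gcongr with u hu
            exact ih u (hchr u hu) (hcardlt u hu)
        _ = ∑ u ∈ desc parent v, w u := hsum.symm
  intro v hv
  exact key (desc parent v).card v hv le_rfl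
end

section
/- Let (V, r, parent) be an arborescence with edge weights c, w : V → ℝ such that c v > 0 and w v > 0 for all v ≠ r, satisfying both the combined triangle inequality and the combined 2-optimality condition. Fix k > 0 and ρ ≥ 0, and let E_ρ = {v ∈ V | v ≠ r, ρ < c(v) ≤ (k/4) · ρ, and k · c(u) ≤ c(v) for every child u of v}. Then Σ_{v ∈ E_ρ} c(v) ≤ 2 · Σ_{v ≠ r} w(v). -/
section AuxProof

open Classical

variable {V : Type} [Fintype V]

lemma mem_desc' {parent : V → V} {x u : V} :
    u ∈ desc parent x ↔ ∃ n : ℕ, parent^[n] u = x := by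
  simp [desc]

lemma mem_children' {parent : V → V} {x u : V} :
    u ∈ children parent x ↔ parent u = x ∧ u ≠ x := by
  simp [children]

lemma self_mem_desc' {parent : V → V} (x : V) : x ∈ desc parent x :=
  mem_desc'.2 ⟨0, rfl⟩

lemma eq_root_of_iterate {r : V} {parent : V → V} (harb : IsArborescence r parent)
    {x : V} {m : ℕ} (hm : 0 < m) (hx : parent^[m] x = x) : x = r := by
  obtain ⟨N, hN⟩ := harb.2 x
  have hle : N ≤ m * N := Nat.le_mul_of_pos_left N hm
  have h1 : parent^[m * N] x = x := by
    rw [Function.iterate_mul]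
    exact Function.iterate_fixed hx N
  have h2 : parent^[m * N] x = r := by
    have e : m * N = (m * N - N) + N := by omega
    rw [e, Function.iterate_add_apply, hN]
    exact Function.iterate_fixed harb.1 _
  rw [h1] at h2; exact h2

lemma root_not_mem_desc {r : V} {parent : V → V} (harb : IsArborescence r parent)
    {x : V} (hx : x ≠ r) : r ∉ desc parent x := by
  intro h
  obtain ⟨n, hn⟩ := mem_desc'.1 h
  rw [Function.iterate_fixed harb.1] at hn
  exact hx hn.symm

lemma ne_root_of_mem_desc {r : V} {parent : V → V} (harb : IsArborescence r parent)
    {x u : V} (hx : x ≠ r) (hu : u ∈ desc parent x) : u ≠ r := by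
  intro h; subst h; exact root_not_mem_desc harb hx hu

lemma child_ne_root {r : V} {parent : V → V} (harb : IsArborescence r parent)
    {x y : V} (hy : y ∈ children parent x) : y ≠ r := by
  obtain ⟨h1, h2⟩ := mem_children'.1 hy
  intro h
  refine h2 ?_
  rw [h] at h1 ⊢
  rw [← h1, harb.1]

lemma desc_child_subset {parent : V → V} {x y : V} (hy : y ∈ children parent x) :
    desc parent y ⊆ desc parent x := by
  intro u hu
  obtain ⟨n, hn⟩ := mem_desc'.1 hu
  refine mem_desc'.2 ⟨n + 1, ?_⟩
  rw [Function.iterate_succ_apply', hn, (mem_children'.1 hy).1]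

lemma not_mem_desc_child {r : V} {parent : V → V} (harb : IsArborescence r parent)
    {x y : V} (hx : x ≠ r) (hy : y ∈ children parent x) :
    x ∉ desc parent y := by
  intro h
  obtain ⟨n, hn⟩ := mem_desc'.1 h
  have hcyc : parent^[n + 1] x = x := by
    rw [Function.iterate_succ_apply', hn, (mem_children'.1 hy).1]
  exact hx (eq_root_of_iterate harb (Nat.succ_pos n) hcyc)

lemma desc_children_disjoint {r : V} {parent : V → V} (harb : IsArborescence r parent)
    {x y1 y2 : V} (hy1 : y1 ∈ children parent x) (hy2 : y2 ∈ children parent x)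
    (hne : y1 ≠ y2) : Disjoint (desc parent y1) (desc parent y2) := by
  have key : ∀ (z1 z2 : V), z1 ∈ children parent x → z2 ∈ children parent x → z1 ≠ z2 →
      ∀ u : V, u ∈ desc parent z1 → u ∈ desc parent z2 →
      ∀ n1 n2 : ℕ, n1 ≤ n2 → parent^[n1] u = z1 → parent^[n2] u = z2 → False := by
    intro z1 z2 hz1 hz2 hzne u hu1 hu2 n1 n2 hle h1 h2
    have hiter : parent^[n2 - n1] z1 = z2 := by
      rw [← h1, ← Function.iterate_add_apply]
      have e : n2 - n1 + n1 = n2 := by omega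
      rw [e, h2]
    rcases Nat.eq_or_lt_of_le hle with heq | hlt
    · subst heq; rw [h1] at h2; exact hzne h2
    · have hd : 1 ≤ n2 - n1 := by omega
      have e : n2 - n1 = (n2 - n1 - 1) + 1 := by omega
      have h5 : parent^[n2 - n1 - 1 + 1] z1 = z2 := by rw [← e]; exact hiter
      have hz2x : z2 = parent^[n2 - n1 - 1] x := by
        rw [← h5, Function.iterate_succ_apply, (mem_children'.1 hz1).1]
      have hxcyc : parent^[n2 - n1] x = x := by
        rw [e, Function.iterate_succ_apply']
        rw [← hz2x, (mem_children'.1 hz2).1]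
      by_cases hxr : x = r
      · have hz2r : z2 = r := by rw [hz2x, hxr, Function.iterate_fixed harb.1]
        exact child_ne_root harb hz2 hz2r
      · exact hxr (eq_root_of_iterate harb (by omega) hxcyc)
  rw [Finset.disjoint_left]
  intro u hu1 hu2
  obtain ⟨n1, h1⟩ := mem_desc'.1 hu1
  obtain ⟨n2, h2⟩ := mem_desc'.1 hu2
  rcases le_total n1 n2 with h | h
  · exact key y1 y2 hy1 hy2 hne u hu1 hu2 n1 n2 h h1 h2
  · exact key y2 y1 hy2 hy1 hne.symm u hu2 hu1 n2 n1 h h2 h1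

lemma exists_child_of_desc {parent : V → V} {x u : V} (hne : u ≠ x)
    (h : ∃ n : ℕ, parent^[n] u = x) :
    ∃ y ∈ children parent x, u ∈ desc parent y := by
  classical
  set n0 := Nat.find h with hn0def
  have hn0 : parent^[n0] u = x := Nat.find_spec h
  have hn0ne : n0 ≠ 0 := by
    intro h0
    rw [h0] at hn0
    exact hne hn0
  refine ⟨parent^[n0 - 1] u, mem_children'.2 ⟨?_, ?_⟩, mem_desc'.2 ⟨n0 - 1, rfl⟩⟩
  · have hstep : parent^[n0 - 1 + 1] u = x := by
      have e : n0 - 1 + 1 = n0 := by omega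
      rw [e]; exact hn0
    rw [← hstep, Function.iterate_succ_apply']
  · intro heq
    have := Nat.find_min h (m := n0 - 1) (by omega)
    exact this heq

lemma desc_eq_insert {r : V} {parent : V → V} (harb : IsArborescence r parent)
    {x : V} (hx : x ≠ r) :
    desc parent x = insert x ((children parent x).biUnion (desc parent)) := by
  ext u
  simp only [Finset.mem_insert, Finset.mem_biUnion]
  constructor
  · intro hu
    by_cases hux : u = x
    · exact Or.inl hux
    · exact Or.inr (exists_child_of_desc hux (mem_desc'.1 hu))
  · rintro (rfl | ⟨y, hy, hu⟩)
    · exact self_mem_desc' u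
    · exact desc_child_subset hy hu

lemma sum_desc_decomp {r : V} {parent : V → V} (harb : IsArborescence r parent)
    {x : V} (hx : x ≠ r) (f : V → ℝ) :
    ∑ u ∈ desc parent x, f u
      = f x + ∑ y ∈ children parent x, ∑ u ∈ desc parent y, f u := by
  rw [desc_eq_insert harb hx, Finset.sum_insert, Finset.sum_biUnion]
  · intro y1 h1 y2 h2 hne
    exact desc_children_disjoint harb (by simpa using h1) (by simpa using h2) hne
  · simp only [Finset.mem_biUnion]
    rintro ⟨y, hy, hx'⟩
    exact not_mem_desc_child harb hx hy hx'

noncomputable def Asum (parent : V → V) (w : V → ℝ) (x : V) : ℝ :=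
  ∑ u ∈ desc parent x, w u

noncomputable def Gsum (parent : V → V) (c : V → ℝ) (E : Finset V) (x : V) : ℝ :=
  ∑ u ∈ desc parent x, (if u ∈ E then c u else 0)

lemma Asum_decomp {r : V} {parent : V → V} (harb : IsArborescence r parent)
    (w : V → ℝ) {x : V} (hx : x ≠ r) :
    Asum parent w x = w x + ∑ y ∈ children parent x, Asum parent w y := by
  simp only [Asum]
  exact sum_desc_decomp harb hx w

lemma Gsum_decomp {r : V} {parent : V → V} (harb : IsArborescence r parent)
    (c : V → ℝ) (E : Finset V) {x : V} (hx : x ≠ r) :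
    Gsum parent c E x = (if x ∈ E then c x else 0)
      + ∑ y ∈ children parent x, Gsum parent c E y := by
  simp only [Gsum]
  exact sum_desc_decomp harb hx _

lemma Asum_nonneg {r : V} {parent : V → V} (harb : IsArborescence r parent)
    {w : V → ℝ} (hw : ∀ v : V, v ≠ r → 0 < w v) {x : V} (hx : x ≠ r) :
    0 ≤ Asum parent w x := by
  apply Finset.sum_nonneg
  intro u hu
  exact le_of_lt (hw u (ne_root_of_mem_desc harb hx hu))

end AuxProof

section Master

open Classical

variable {V : Type} [Fintype V]

lemma master_lemma
    (r : V) (parent : V → V) (c w : V → ℝ)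
    (harb : IsArborescence r parent)
    (hc : ∀ v : V, v ≠ r → 0 < c v) (hw : ∀ v : V, v ≠ r → 0 < w v)
    (htri : CombinedTriangle r parent c w)
    (h2opt : CombinedTwoOpt r parent c w)
    (k ρ : ℝ) (hk : 0 < k) (hρ : 0 < ρ)
    (E : Finset V)
    (hE : ∀ v : V, v ∈ E ↔ (v ≠ r ∧ ρ < c v ∧ c v ≤ (k / 4) * ρ ∧
      ∀ u ∈ children parent v, k * c u ≤ c v)) :
    ∀ n : ℕ, ∀ x : V, (desc parent x).card ≤ n → x ≠ r →
      (x ∈ E → Gsum parent c E x ≤ 2 * Asum parent w x - c x) ∧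
      (x ∉ E → ∃ p q : ℝ, 0 ≤ p ∧ 0 ≤ q ∧ q ≤ Asum parent w x ∧
        Gsum parent c E x ≤ 2 * q - p ∧
        c x ≤ (Asum parent w x - q) + p ∧
        min (4 * c x) (c x + 2 * ρ) ≤ 4 * (Asum parent w x - q) + p) := by
  intro n
  induction n with
  | zero =>
    intro x hcard hx
    exfalso
    have := Finset.card_pos.mpr ⟨x, self_mem_desc' (parent := parent) x⟩
    omega
  | succ n ih =>
    intro x hcard hx
    have hkidcard : ∀ y ∈ children parent x, (desc parent y).card ≤ n := by
      intro y hy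
      have hss : desc parent y ⊂ desc parent x := by
        rw [Finset.ssubset_def]
        refine ⟨desc_child_subset hy, fun hsub => ?_⟩
        exact not_mem_desc_child harb hx hy (hsub (self_mem_desc' x))
      have := Finset.card_lt_card hss
      omega
    have IHkid : ∀ y ∈ children parent x,
        (y ∈ E → Gsum parent c E y ≤ 2 * Asum parent w y - c y) ∧
        (y ∉ E → ∃ p q : ℝ, 0 ≤ p ∧ 0 ≤ q ∧ q ≤ Asum parent w y ∧
          Gsum parent c E y ≤ 2 * q - p ∧
          c y ≤ (Asum parent w y - q) + p ∧
          min (4 * c y) (c y + 2 * ρ) ≤ 4 * (Asum parent w y - q) + p) :=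
      fun y hy => ih y (hkidcard y hy) (child_ne_root harb hy)
    have hA : Asum parent w x = w x + ∑ y ∈ children parent x, Asum parent w y :=
      Asum_decomp harb w hx
    have hG : Gsum parent c E x = (if x ∈ E then c x else 0)
        + ∑ y ∈ children parent x, Gsum parent c E y := Gsum_decomp harb c E hx
    have htrix : c x ≤ w x + ∑ y ∈ children parent x, c y := htri x hx
    have hwx : 0 < w x := hw x hx
    by_cases hEx : x ∈ E
    · -- x is in E
      refine ⟨fun _ => ?_, fun h => absurd hEx h⟩
      obtain ⟨_, hEx1, hEx2, hEx3⟩ := (hE x).1 hEx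
      have hkidsmall : ∀ y ∈ children parent x, c y ≤ ρ / 4 := by
        intro y hy
        have h1 : k * c y ≤ c x := hEx3 y hy
        have h2 : k * c y ≤ k * (ρ / 4) := by nlinarith
        exact le_of_mul_le_mul_left h2 hk
      have hkidnotE : ∀ y ∈ children parent x, y ∉ E := by
        intro y hy hmem
        obtain ⟨_, h1, _, _⟩ := (hE y).1 hmem
        have := hkidsmall y hy
        linarith
      have hex : ∀ y : V, ∃ p q : ℝ, y ∈ children parent x →
          (0 ≤ p ∧ 0 ≤ q ∧ q ≤ Asum parent w y ∧ Gsum parent c E y ≤ 2 * q - p ∧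
           c y ≤ (Asum parent w y - q) + p ∧
           min (4 * c y) (c y + 2 * ρ) ≤ 4 * (Asum parent w y - q) + p) := by
        intro y
        by_cases hy : y ∈ children parent x
        · obtain ⟨p, q, hfacts⟩ := (IHkid y hy).2 (hkidnotE y hy)
          exact ⟨p, q, fun _ => hfacts⟩
        · exact ⟨0, 0, fun h => absurd h hy⟩
      choose p q hpq using hex
      have h4y : ∀ y ∈ children parent x,
          4 * c y ≤ 4 * (Asum parent w y - q y) + p y := by
        intro y hy
        obtain ⟨_, _, _, _, _, hmin⟩ := hpq y hy
        have hmeq : min (4 * c y) (c y + 2 * ρ) = 4 * c y := by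
          apply min_eq_left
          have := hkidsmall y hy
          linarith
        rw [hmeq] at hmin
        exact hmin
      -- sums
      have hsum4 : ∑ y ∈ children parent x, (4 * c y)
          ≤ ∑ y ∈ children parent x, (4 * (Asum parent w y - q y) + p y) :=
        Finset.sum_le_sum h4y
      have e1 : ∑ y ∈ children parent x, (4 * c y)
          = 4 * ∑ y ∈ children parent x, c y := by
        rw [Finset.mul_sum]
      have e2 : ∑ y ∈ children parent x, (4 * (Asum parent w y - q y) + p y)
          = 4 * ((∑ y ∈ children parent x, Asum parent w y)
              - ∑ y ∈ children parent x, q y) + ∑ y ∈ children parent x, p y := by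
        rw [Finset.sum_add_distrib, ← Finset.mul_sum, Finset.sum_sub_distrib]
      have hGsum : ∑ y ∈ children parent x, Gsum parent c E y
          ≤ 2 * (∑ y ∈ children parent x, q y) - ∑ y ∈ children parent x, p y := by
        have h := Finset.sum_le_sum (s := children parent x)
          (f := fun y => Gsum parent c E y) (g := fun y => 2 * q y - p y)
          (fun y hy => (hpq y hy).2.2.2.1)
        have e : ∑ y ∈ children parent x, (2 * q y - p y)
            = 2 * (∑ y ∈ children parent x, q y) - ∑ y ∈ children parent x, p y := by
          rw [Finset.sum_sub_distrib, ← Finset.mul_sum]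
        linarith [e ▸ h]
      have hqleA : ∑ y ∈ children parent x, q y
          ≤ ∑ y ∈ children parent x, Asum parent w y :=
        Finset.sum_le_sum (fun y hy => (hpq y hy).2.2.1)
      have hpnn : 0 ≤ ∑ y ∈ children parent x, p y :=
        Finset.sum_nonneg (fun y hy => (hpq y hy).1)
      rw [hG, if_pos hEx, hA]
      by_cases hcase : c x ≤ w x + ((∑ y ∈ children parent x, Asum parent w y)
          - ∑ y ∈ children parent x, q y)
      · linarith
      · push_neg at hcase
        linarith
    · -- x is not in E
      refine ⟨fun h => absurd h hEx, fun _ => ?_⟩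
      have hZfacts : ∀ z ∈ (children parent x).filter (fun y => y ∈ E),
          Gsum parent c E z ≤ 2 * Asum parent w z - c z := by
        intro z hz
        obtain ⟨hz1, hz2⟩ := Finset.mem_filter.1 hz
        exact (IHkid z hz1).1 hz2
      have hZc : ∀ z ∈ (children parent x).filter (fun y => y ∈ E), ρ < c z := by
        intro z hz
        obtain ⟨hz1, hz2⟩ := Finset.mem_filter.1 hz
        exact ((hE z).1 hz2).2.1
      have hZA : ∀ z ∈ (children parent x).filter (fun y => y ∈ E),
          0 ≤ Asum parent w z := by
        intro z hz
        obtain ⟨hz1, _⟩ := Finset.mem_filter.1 hz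
        exact Asum_nonneg harb hw (child_ne_root harb hz1)
      have hex : ∀ y : V, ∃ p q : ℝ,
          y ∈ (children parent x).filter (fun y => ¬ y ∈ E) →
          (0 ≤ p ∧ 0 ≤ q ∧ q ≤ Asum parent w y ∧ Gsum parent c E y ≤ 2 * q - p ∧
           c y ≤ (Asum parent w y - q) + p ∧
           min (4 * c y) (c y + 2 * ρ) ≤ 4 * (Asum parent w y - q) + p) := by
        intro y
        by_cases hy : y ∈ (children parent x).filter (fun y => ¬ y ∈ E)
        · obtain ⟨hy1, hy2⟩ := Finset.mem_filter.1 hy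
          obtain ⟨p, q, hfacts⟩ := (IHkid y hy1).2 hy2
          exact ⟨p, q, fun _ => hfacts⟩
        · exact ⟨0, 0, fun h => absurd h hy⟩
      choose p q hpq using hex
      -- abbreviations via equalities
      have hsplitA : (∑ z ∈ (children parent x).filter (fun y => y ∈ E), Asum parent w z)
          + ∑ y ∈ (children parent x).filter (fun y => ¬ y ∈ E), Asum parent w y
          = ∑ y ∈ children parent x, Asum parent w y :=
        Finset.sum_filter_add_sum_filter_not _ _ _
      have hsplitc : (∑ z ∈ (children parent x).filter (fun y => y ∈ E), c z)
          + ∑ y ∈ (children parent x).filter (fun y => ¬ y ∈ E), c y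
          = ∑ y ∈ children parent x, c y :=
        Finset.sum_filter_add_sum_filter_not _ _ _
      have hsplitG : (∑ z ∈ (children parent x).filter (fun y => y ∈ E), Gsum parent c E z)
          + ∑ y ∈ (children parent x).filter (fun y => ¬ y ∈ E), Gsum parent c E y
          = ∑ y ∈ children parent x, Gsum parent c E y :=
        Finset.sum_filter_add_sum_filter_not _ _ _
      have hGZ : ∑ z ∈ (children parent x).filter (fun y => y ∈ E), Gsum parent c E z
          ≤ 2 * (∑ z ∈ (children parent x).filter (fun y => y ∈ E), Asum parent w z)
            - ∑ z ∈ (children parent x).filter (fun y => y ∈ E), c z := by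
        have h := Finset.sum_le_sum hZfacts
        have e : ∑ z ∈ (children parent x).filter (fun y => y ∈ E),
            (2 * Asum parent w z - c z)
            = 2 * (∑ z ∈ (children parent x).filter (fun y => y ∈ E), Asum parent w z)
              - ∑ z ∈ (children parent x).filter (fun y => y ∈ E), c z := by
          rw [Finset.sum_sub_distrib, ← Finset.mul_sum]
        linarith [e ▸ h]
      have hSZc : 0 ≤ ∑ z ∈ (children parent x).filter (fun y => y ∈ E), c z :=
        Finset.sum_nonneg (fun z hz => le_of_lt (lt_trans hρ (hZc z hz)))
      have hSZA : 0 ≤ ∑ z ∈ (children parent x).filter (fun y => y ∈ E), Asum parent w z :=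
        Finset.sum_nonneg hZA
      have hGY : ∑ y ∈ (children parent x).filter (fun y => ¬ y ∈ E), Gsum parent c E y
          ≤ 2 * (∑ y ∈ (children parent x).filter (fun y => ¬ y ∈ E), q y)
            - ∑ y ∈ (children parent x).filter (fun y => ¬ y ∈ E), p y := by
        have h := Finset.sum_le_sum (s := (children parent x).filter (fun y => ¬ y ∈ E))
          (f := fun y => Gsum parent c E y) (g := fun y => 2 * q y - p y)
          (fun y hy => (hpq y hy).2.2.2.1)
        have e : ∑ y ∈ (children parent x).filter (fun y => ¬ y ∈ E), (2 * q y - p y)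
            = 2 * (∑ y ∈ (children parent x).filter (fun y => ¬ y ∈ E), q y)
              - ∑ y ∈ (children parent x).filter (fun y => ¬ y ∈ E), p y := by
          rw [Finset.sum_sub_distrib, ← Finset.mul_sum]
        linarith [e ▸ h]
      have hqleA : ∑ y ∈ (children parent x).filter (fun y => ¬ y ∈ E), q y
          ≤ ∑ y ∈ (children parent x).filter (fun y => ¬ y ∈ E), Asum parent w y :=
        Finset.sum_le_sum (fun y hy => (hpq y hy).2.2.1)
      have hpnn : 0 ≤ ∑ y ∈ (children parent x).filter (fun y => ¬ y ∈ E), p y :=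
        Finset.sum_nonneg (fun y hy => (hpq y hy).1)
      have hqnn : 0 ≤ ∑ y ∈ (children parent x).filter (fun y => ¬ y ∈ E), q y :=
        Finset.sum_nonneg (fun y hy => (hpq y hy).2.1)
      have hcY : ∑ y ∈ (children parent x).filter (fun y => ¬ y ∈ E), c y
          ≤ ((∑ y ∈ (children parent x).filter (fun y => ¬ y ∈ E), Asum parent w y)
              - ∑ y ∈ (children parent x).filter (fun y => ¬ y ∈ E), q y)
            + ∑ y ∈ (children parent x).filter (fun y => ¬ y ∈ E), p y := by
        have h := Finset.sum_le_sum (s := (children parent x).filter (fun y => ¬ y ∈ E))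
          (f := c) (g := fun y => (Asum parent w y - q y) + p y)
          (fun y hy => (hpq y hy).2.2.2.2.1)
        have e : ∑ y ∈ (children parent x).filter (fun y => ¬ y ∈ E),
            ((Asum parent w y - q y) + p y)
            = ((∑ y ∈ (children parent x).filter (fun y => ¬ y ∈ E), Asum parent w y)
              - ∑ y ∈ (children parent x).filter (fun y => ¬ y ∈ E), q y)
            + ∑ y ∈ (children parent x).filter (fun y => ¬ y ∈ E), p y := by
          rw [Finset.sum_add_distrib, Finset.sum_sub_distrib]
        linarith [e ▸ h]
      refine ⟨(∑ z ∈ (children parent x).filter (fun y => y ∈ E), c z)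
            + ∑ y ∈ (children parent x).filter (fun y => ¬ y ∈ E), p y,
          (∑ z ∈ (children parent x).filter (fun y => y ∈ E), Asum parent w z)
            + ∑ y ∈ (children parent x).filter (fun y => ¬ y ∈ E), q y,
          by linarith, by linarith, by rw [hA]; linarith,
          by rw [hG, if_neg hEx]; linarith, by rw [hA]; linarith, ?_⟩
      -- the min inequality
      by_cases hZne : ((children parent x).filter (fun y => y ∈ E)).Nonempty
      · obtain ⟨z0, hz0⟩ := hZne
        have hz0kid : z0 ∈ children parent x := (Finset.mem_filter.1 hz0).1
        have hρz0 : ρ < c z0 := hZc z0 hz0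
        have h2o : c x + c z0 ≤ w x + ∑ u ∈ (children parent x).erase z0, c u :=
          h2opt x hx z0 hz0kid
        have herase : c z0 + ∑ u ∈ (children parent x).erase z0, c u
            = ∑ u ∈ children parent x, c u :=
          Finset.add_sum_erase _ c hz0kid
        have hmr : min (4 * c x) (c x + 2 * ρ) ≤ c x + 2 * ρ := min_le_right _ _
        rw [hA]
        linarith
      · have hZempty : (children parent x).filter (fun y => y ∈ E) = ∅ :=
          Finset.not_nonempty_iff_eq_empty.1 hZne
        have eZc : ∑ z ∈ (children parent x).filter (fun y => y ∈ E), c z = 0 := by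
          rw [hZempty]; simp
        have eZA : ∑ z ∈ (children parent x).filter (fun y => y ∈ E), Asum parent w z = 0 := by
          rw [hZempty]; simp
        by_cases hbig : ∃ y0 ∈ (children parent x).filter (fun y => ¬ y ∈ E),
            c y0 + 2 * ρ ≤ 4 * c y0
        · obtain ⟨y0, hy0, hy0c⟩ := hbig
          have hminy0 : c y0 + 2 * ρ ≤ 4 * (Asum parent w y0 - q y0) + p y0 := by
            have h := (hpq y0 hy0).2.2.2.2.2
            rw [min_eq_right hy0c] at h
            exact h
          have hsumY : (c y0 + 2 * ρ)
              + ∑ y ∈ ((children parent x).filter (fun y => ¬ y ∈ E)).erase y0, c y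
              ≤ ∑ y ∈ (children parent x).filter (fun y => ¬ y ∈ E),
                  (4 * (Asum parent w y - q y) + p y) := by
            rw [← Finset.add_sum_erase _ _ hy0]
            apply add_le_add hminy0
            apply Finset.sum_le_sum
            intro y hy
            have hyY := Finset.mem_of_mem_erase hy
            obtain ⟨hp0, hq0, hqA, _, hcy, _⟩ := hpq y hyY
            linarith
          have hsplitY : c y0 + ∑ y ∈ ((children parent x).filter (fun y => ¬ y ∈ E)).erase y0, c y
              = ∑ y ∈ (children parent x).filter (fun y => ¬ y ∈ E), c y :=
            Finset.add_sum_erase _ c hy0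
          have e2 : ∑ y ∈ (children parent x).filter (fun y => ¬ y ∈ E),
              (4 * (Asum parent w y - q y) + p y)
              = 4 * ((∑ y ∈ (children parent x).filter (fun y => ¬ y ∈ E), Asum parent w y)
                  - ∑ y ∈ (children parent x).filter (fun y => ¬ y ∈ E), q y)
                + ∑ y ∈ (children parent x).filter (fun y => ¬ y ∈ E), p y := by
            rw [Finset.sum_add_distrib, ← Finset.mul_sum, Finset.sum_sub_distrib]
          have hmr : min (4 * c x) (c x + 2 * ρ) ≤ c x + 2 * ρ := min_le_right _ _
          rw [hA]
          linarith
        · push_neg at hbig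
          have hsmall : ∀ y ∈ (children parent x).filter (fun y => ¬ y ∈ E),
              4 * c y ≤ 4 * (Asum parent w y - q y) + p y := by
            intro y hy
            have h := (hpq y hy).2.2.2.2.2
            rw [min_eq_left (le_of_lt (hbig y hy))] at h
            exact h
          have hsum := Finset.sum_le_sum hsmall
          have e1 : ∑ y ∈ (children parent x).filter (fun y => ¬ y ∈ E), (4 * c y)
              = 4 * ∑ y ∈ (children parent x).filter (fun y => ¬ y ∈ E), c y := by
            rw [Finset.mul_sum]
          have e2 : ∑ y ∈ (children parent x).filter (fun y => ¬ y ∈ E),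
              (4 * (Asum parent w y - q y) + p y)
              = 4 * ((∑ y ∈ (children parent x).filter (fun y => ¬ y ∈ E), Asum parent w y)
                  - ∑ y ∈ (children parent x).filter (fun y => ¬ y ∈ E), q y)
                + ∑ y ∈ (children parent x).filter (fun y => ¬ y ∈ E), p y := by
            rw [Finset.sum_add_distrib, ← Finset.mul_sum, Finset.sum_sub_distrib]
          have hml : min (4 * c x) (c x + 2 * ρ) ≤ 4 * c x := min_le_left _ _
          rw [hA]
          linarith

end Master

section Final

open Classical

variable {V : Type} [Fintype V]

lemma nonRoot_eq_biUnion {r : V} {parent : V → V} (harb : IsArborescence r parent) :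
    nonRoot r = (children parent r).biUnion (desc parent) := by
  ext v
  simp only [nonRoot, Finset.mem_filter, Finset.mem_univ, true_and, Finset.mem_biUnion]
  constructor
  · intro hv
    exact exists_child_of_desc hv (harb.2 v)
  · rintro ⟨y, hy, hv⟩
    exact ne_root_of_mem_desc harb (child_ne_root harb hy) hv

lemma final_aux (r : V) (parent : V → V) (c w : V → ℝ)
    (harb : IsArborescence r parent)
    (hc : ∀ v : V, v ≠ r → 0 < c v) (hw : ∀ v : V, v ≠ r → 0 < w v)
    (htri : CombinedTriangle r parent c w)
    (h2opt : CombinedTwoOpt r parent c w)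
    (k ρ : ℝ) (hk : 0 < k) (hρ : 0 ≤ ρ)
    (E : Finset V)
    (hE : ∀ v : V, v ∈ E ↔ (v ≠ r ∧ ρ < c v ∧ c v ≤ (k / 4) * ρ ∧
      ∀ u ∈ children parent v, k * c u ≤ c v)) :
    ∑ v ∈ E, c v ≤ 2 * ∑ v ∈ nonRoot r, w v := by
  have hwnn : 0 ≤ ∑ v ∈ nonRoot r, w v := by
    apply Finset.sum_nonneg
    intro v hv
    have hvr : v ≠ r := by
      simpa [nonRoot] using hv
    exact le_of_lt (hw v hvr)
  rcases eq_or_lt_of_le hρ with hρ0 | hρpos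
  · -- ρ = 0 : E is empty
    have hempty : ∀ v : V, v ∉ E := by
      intro v hv
      obtain ⟨hv1, hv2, hv3, _⟩ := (hE v).1 hv
      have : (k / 4) * ρ = 0 := by rw [← hρ0]; ring
      linarith
    have : ∑ v ∈ E, c v = 0 :=
      Finset.sum_eq_zero (fun v hv => absurd hv (hempty v))
    linarith
  · -- ρ > 0 : use the master lemma
    have hsub : E ⊆ nonRoot r := by
      intro v hv
      have := ((hE v).1 hv).1
      simp [nonRoot, this]
    have h1 : ∑ v ∈ E, c v = ∑ v ∈ nonRoot r, (if v ∈ E then c v else 0) := by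
      rw [Finset.sum_ite_mem, Finset.inter_eq_right.mpr hsub]
    have hdisj : ∀ y1 ∈ children parent r, ∀ y2 ∈ children parent r, y1 ≠ y2 →
        Disjoint (desc parent y1) (desc parent y2) :=
      fun y1 h1 y2 h2 hne => desc_children_disjoint harb h1 h2 hne
    have h2 : ∑ v ∈ nonRoot r, (if v ∈ E then c v else 0)
        = ∑ y ∈ children parent r, Gsum parent c E y := by
      rw [nonRoot_eq_biUnion harb, Finset.sum_biUnion]
      · rfl
      · intro y1 hy1 y2 hy2 hne
        exact hdisj y1 (by simpa using hy1) y2 (by simpa using hy2) hne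
    have h3 : ∑ v ∈ nonRoot r, w v = ∑ y ∈ children parent r, Asum parent w y := by
      rw [nonRoot_eq_biUnion harb, Finset.sum_biUnion]
      · rfl
      · intro y1 hy1 y2 hy2 hne
        exact hdisj y1 (by simpa using hy1) y2 (by simpa using hy2) hne
    have hbound : ∀ y ∈ children parent r, Gsum parent c E y ≤ 2 * Asum parent w y := by
      intro y hy
      have hyr : y ≠ r := child_ne_root harb hy
      have hm := master_lemma r parent c w harb hc hw htri h2opt k ρ hk hρpos E hE
        ((desc parent y).card) y le_rfl hyr
      by_cases hyE : y ∈ E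
      · have := hm.1 hyE
        have := hc y hyr
        linarith
      · obtain ⟨p, q, hp, hq, hqA, hG, _, _⟩ := hm.2 hyE
        linarith
    have h4 : ∑ y ∈ children parent r, Gsum parent c E y
        ≤ ∑ y ∈ children parent r, 2 * Asum parent w y :=
      Finset.sum_le_sum hbound
    have h5 : ∑ y ∈ children parent r, 2 * Asum parent w y
        = 2 * ∑ y ∈ children parent r, Asum parent w y := by
      rw [Finset.mul_sum]
    linarith [h1, h2, h3, h4, h5]

end Final

open Classical in
theorem sum_c_Er_le {V : Type} [Fintype V]
    (r : V) (parent : V → V) (c w : V → ℝ)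
    (harb : IsArborescence r parent)
    (hc : ∀ v : V, v ≠ r → 0 < c v) (hw : ∀ v : V, v ≠ r → 0 < w v)
    (htri : CombinedTriangle r parent c w)
    (h2opt : CombinedTwoOpt r parent c w)
    (k ρ : ℝ) (hk : 0 < k) (hρ : 0 ≤ ρ) :
    ∑ v ∈ (nonRoot r).filter
        (fun v => ρ < c v ∧ c v ≤ (k / 4) * ρ ∧ ∀ u ∈ children parent v, k * c u ≤ c v), c v ≤
      2 * ∑ v ∈ nonRoot r, w v := by
  apply final_aux r parent c w harb hc hw htri h2opt k ρ hk hρ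
  intro v
  simp only [Finset.mem_filter, nonRoot, Finset.mem_univ, true_and]
end
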